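/- arXiv:2109.08414 — 2 statements merged into one kernel-verified Lean document; each statement's English description precedes it below -/
import Mathlib

section
/- If I is an α-prime hyperideal of R and S is a nonempty subset of R, then the quotient (I : S) = {r ∈ R : r∘S ⊆ I} is an α-prime hyperideal of R (provided it is proper). -/
open Pointwise

namespace HyperPaper

/-- A commutative multiplicative hyperring on an additive commutative group:
the hypermultiplication is associative, commutative, subdistributive over `+`,
and compatible with negation. -/
structure MulHyperring (R : Type*) [AddCommGroup R] where
  hmul : R → R → Set R
  nonempty : ∀ a b, (hmul a b).Nonempty
  comm : ∀ a b, hmul a b = hmul b a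
  assoc : ∀ a b c, (⋃ t ∈ hmul a b, hmul t c) = ⋃ t ∈ hmul b c, hmul a t
  distrib : ∀ a b c, hmul a (b + c) ⊆ hmul a b + hmul a c
  hmul_neg : ∀ a b, hmul a (-b) = -(hmul a b)

variable {R : Type*} [AddCommGroup R]

/-- Product of two subsets under the hyperoperation. -/
def MulHyperring.setMul (H : MulHyperring R) (A B : Set R) : Set R :=
  ⋃ a ∈ A, ⋃ b ∈ B, H.hmul a b

/-- `H.hpow a n` is the `(n+1)`-fold hyperproduct `a ∘ a ∘ ⋯ ∘ a`. -/
def MulHyperring.hpow (H : MulHyperring R) (a : R) : ℕ → Set R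
  | 0 => {a}
  | n + 1 => H.setMul {a} (H.hpow a n)

/-- `H.hprod a l` is the hyperproduct of the list `a :: l`. -/
def MulHyperring.hprod (H : MulHyperring R) (a : R) : List R → Set R
  | [] => {a}
  | b :: l => H.setMul {a} (H.hprod b l)

/-- A hyperideal: an additive subgroup absorbing hypermultiplication. -/
structure Hyperideal (H : MulHyperring R) where
  carrier : Set R
  zero_mem : (0 : R) ∈ carrier
  sub_mem : ∀ a b, a ∈ carrier → b ∈ carrier → a - b ∈ carrier
  absorb : ∀ r x, x ∈ carrier → H.hmul r x ⊆ carrier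

/-- A C-hyperideal: any finite hyperproduct meeting it is contained in it. -/
def IsCHyperideal (H : MulHyperring R) (I : Hyperideal H) : Prop :=
  ∀ a (l : List R), (H.hprod a l ∩ I.carrier).Nonempty → H.hprod a l ⊆ I.carrier

/-- A good homomorphism between multiplicative hyperrings. -/
def IsGoodHom {R₁ R₂ : Type*} [AddCommGroup R₁] [AddCommGroup R₂]
    (H₁ : MulHyperring R₁) (H₂ : MulHyperring R₂) (f : R₁ → R₂) : Prop :=
  (∀ x y, f (x + y) = f x + f y) ∧ ∀ x y, f '' H₁.hmul x y = H₂.hmul (f x) (f y)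

/-- A good endomorphism. -/
def IsGoodEndo (H : MulHyperring R) (α : R → R) : Prop :=
  IsGoodHom H H α

/-- A proper hyperideal `I` is `α`-prime if `x ∘ y ⊆ I` implies `x ∈ I` or `α y ∈ I`. -/
def IsAlphaPrime (H : MulHyperring R) (α : R → R) (I : Hyperideal H) : Prop :=
  I.carrier ≠ Set.univ ∧
    ∀ x y, H.hmul x y ⊆ I.carrier → x ∈ I.carrier ∨ α y ∈ I.carrier

/-- A proper hyperideal `I` is prime if `x ∘ y ⊆ I` implies `x ∈ I` or `y ∈ I`. -/
def IsPrime (H : MulHyperring R) (I : Hyperideal H) : Prop :=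
  I.carrier ≠ Set.univ ∧
    ∀ x y, H.hmul x y ⊆ I.carrier → x ∈ I.carrier ∨ y ∈ I.carrier

/-- The radical `√S = {r | rⁿ ⊆ S for some n}`. -/
def radical (H : MulHyperring R) (S : Set R) : Set R :=
  {r | ∃ n : ℕ, H.hpow r n ⊆ S}

/-- The `α`-radical `ᵅ√S = {r | α(rⁿ) ⊆ S for some n}`. -/
def alphaRad (H : MulHyperring R) (α : R → R) (S : Set R) : Set R :=
  {r | ∃ n : ℕ, α '' H.hpow r n ⊆ S}

/-- The set of `α`-nilpotent elements. -/
def nilAlpha (H : MulHyperring R) (α : R → R) : Set R :=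
  {x | ∃ n : ℕ, (0 : R) ∈ α '' H.hpow x n}

/-- The `n`-fold set power of a hyperideal carrier: `idealPow H S n = S^(n+1)`. -/
def idealPow (H : MulHyperring R) (S : Set R) : ℕ → Set R
  | 0 => S
  | n + 1 => H.setMul S (idealPow H S n)

end HyperPaper

open HyperPaper

namespace HyperPaper

variable {R : Type*} [AddCommGroup R] {H : MulHyperring R}

namespace MulHyperring

theorem exists_mem_hmul_of_mem_hmul_hmul {a b c t z : R} (ht : t ∈ H.hmul a b)
    (hz : z ∈ H.hmul t c) : ∃ u ∈ H.hmul b c, z ∈ H.hmul a u := by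
  have hmem : z ∈ ⋃ t ∈ H.hmul a b, H.hmul t c := Set.mem_biUnion ht hz
  rw [H.assoc] at hmem
  simpa only [Set.mem_iUnion, exists_prop] using hmem

theorem hmul_sub_subset (a b c : R) : H.hmul a (b - c) ⊆ H.hmul a b - H.hmul a c := by
  simpa only [sub_eq_add_neg, H.hmul_neg] using H.distrib a b (-c)

end MulHyperring

namespace Hyperideal

theorem hmul_subset_of_right_mem (I : Hyperideal H) {x r : R} (hx : x ∈ I.carrier) :
    H.hmul x r ⊆ I.carrier :=
  H.comm x r ▸ I.absorb r x hx

def colon (I : Hyperideal H) (S : Set R) : Hyperideal H where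
  carrier := {r | ∀ s ∈ S, H.hmul r s ⊆ I.carrier}
  zero_mem s _ := I.hmul_subset_of_right_mem I.zero_mem
  sub_mem a b ha hb s hs z hz := by
    rw [H.comm] at hz
    obtain ⟨u, hu, v, hv, rfl⟩ := H.hmul_sub_subset s a b hz
    rw [H.comm] at hu hv
    exact I.sub_mem u v (ha s hs hu) (hb s hs hv)
  absorb r x hx y hy s hs z hz := by
    obtain ⟨t, ht, hzt⟩ := H.exists_mem_hmul_of_mem_hmul_hmul hy hz
    exact I.absorb r t (hx s hs ht) hzt

variable {I : Hyperideal H} {S : Set R}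

theorem carrier_subset_colon : I.carrier ⊆ (I.colon S).carrier :=
  fun _ ha _ _ => I.hmul_subset_of_right_mem ha

/-- `t ∘ y ⊆ (x ∘ s) ∘ y = (x ∘ y) ∘ s ⊆ I`. -/
theorem hmul_subset_of_hmul_subset_colon {x y s t : R}
    (hxy : H.hmul x y ⊆ (I.colon S).carrier) (hs : s ∈ S) (ht : t ∈ H.hmul x s) :
    H.hmul t y ⊆ I.carrier := by
  intro w hw
  rw [H.comm] at ht
  obtain ⟨u, hu, hwu⟩ := H.exists_mem_hmul_of_mem_hmul_hmul ht hw
  rw [H.comm] at hwu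
  exact hxy hu s hs hwu

end Hyperideal

theorem IsAlphaPrime.colon {α : R → R} {I : Hyperideal H} (hp : IsAlphaPrime H α I)
    {S : Set R} (hproper : (I.colon S).carrier ≠ Set.univ) :
    IsAlphaPrime H α (I.colon S) := by
  refine ⟨hproper, fun x y hxy => or_iff_not_imp_right.2 fun hy s hs t ht => ?_⟩
  exact (hp.2 t y (Hyperideal.hmul_subset_of_hmul_subset_colon hxy hs ht)).resolve_right
    fun h => hy (Hyperideal.carrier_subset_colon h)

end HyperPaper

open HyperPaper

theorem stmt5_general {R : Type*} [AddCommGroup R] (H : MulHyperring R) (α : R → R)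
    (I : Hyperideal H) (hp : IsAlphaPrime H α I)
    (S : Set R)
    (hproper : {r : R | ∀ s ∈ S, H.hmul r s ⊆ I.carrier} ≠ Set.univ) :
    ∃ J : Hyperideal H, J.carrier = {r : R | ∀ s ∈ S, H.hmul r s ⊆ I.carrier} ∧
      IsAlphaPrime H α J :=
  ⟨I.colon S, rfl, hp.colon hproper⟩

/-- If `I` is `α`-prime and `S` nonempty, then `(I : S)` is an
`α`-prime hyperideal (provided it is proper). -/
theorem stmt5 {R : Type*} [AddCommGroup R] (H : MulHyperring R) (α : R → R)
    (hα : IsGoodEndo H α) (I : Hyperideal H) (hp : IsAlphaPrime H α I)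
    (S : Set R) (hS : S.Nonempty)
    (hproper : {r : R | ∀ s ∈ S, H.hmul r s ⊆ I.carrier} ≠ Set.univ) :
    ∃ J : Hyperideal H, J.carrier = {r : R | ∀ s ∈ S, H.hmul r s ⊆ I.carrier} ∧
      IsAlphaPrime H α J :=
  stmt5_general H α I hp S hproper
end

section
/- For a multiplicative hyperring R with zero absorbing property, Nil_α(R) ⊆ ᵅ√⟨0⟩, where ᵅ√J = {r ∈ R : α(rⁿ) ⊆ J for some n ∈ ℕ}; moreover equality holds since ⟨0⟩ is a C-hyperideal. -/
open Pointwise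

/-!
Zero absorption makes `{0}` a hyperideal, so the smallest hyperideal `⟨0⟩` is `{0}`. A good
endomorphism maps hyperpowers to hyperpowers, so `α(xⁿ) = (α x)ⁿ` is a finite hyperproduct and the
C-property upgrades `0 ∈ α(xⁿ)` to `α(xⁿ) ⊆ ⟨0⟩`. Conversely `α(xⁿ)` is nonempty, so
`α(xⁿ) ⊆ {0}` forces `0 ∈ α(xⁿ)`.
-/

namespace HyperPaper

variable {R : Type*} [AddCommGroup R]

namespace MulHyperring

variable (H : MulHyperring R)

theorem hpow_succ (a : R) (n : ℕ) :
    H.hpow a (n + 1) = ⋃ b ∈ H.hpow a n, H.hmul a b := by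
  simp [hpow, setMul]

theorem hpow_nonempty (a : R) (n : ℕ) : (H.hpow a n).Nonempty := by
  induction n with
  | zero => exact Set.singleton_nonempty a
  | succ n ih =>
    obtain ⟨b, hb⟩ := ih
    obtain ⟨c, hc⟩ := H.nonempty a b
    exact ⟨c, H.hpow_succ a n ▸ Set.mem_biUnion hb hc⟩

theorem hpow_eq_hprod_replicate (a : R) (n : ℕ) :
    H.hpow a n = H.hprod a (List.replicate n a) := by
  induction n with
  | zero => rfl
  | succ n ih => simp [hpow, hprod, List.replicate, ih]

def zeroHyperideal (hzero : ∀ r : R, H.hmul 0 r = {0}) : Hyperideal H where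
  carrier := {0}
  zero_mem := rfl
  sub_mem := by rintro a b rfl rfl; simp
  absorb := by rintro r x rfl; rw [H.comm, hzero]

end MulHyperring

theorem IsGoodEndo.image_hpow {H : MulHyperring R} {α : R → R} (hα : IsGoodEndo H α)
    (a : R) (n : ℕ) : α '' H.hpow a n = H.hpow (α a) n := by
  induction n with
  | zero => simp [MulHyperring.hpow]
  | succ n ih =>
    rw [H.hpow_succ, H.hpow_succ, Set.image_iUnion₂, ← ih, Set.biUnion_image]
    exact Set.iUnion₂_congr fun b _ => hα.2 a b

theorem Hyperideal.carrier_eq_zero_of_forall_subset {H : MulHyperring R}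
    (hzero : ∀ r : R, H.hmul 0 r = {0}) {Z : Hyperideal H}
    (hZmin : ∀ J : Hyperideal H, Z.carrier ⊆ J.carrier) : Z.carrier = {0} :=
  (hZmin (H.zeroHyperideal hzero)).antisymm (Set.singleton_subset_iff.2 Z.zero_mem)

theorem IsCHyperideal.nilAlpha_subset_alphaRad {H : MulHyperring R} {α : R → R}
    (hα : IsGoodEndo H α) {I : Hyperideal H} (hI : IsCHyperideal H I) :
    nilAlpha H α ⊆ alphaRad H α I.carrier := by
  rintro x ⟨n, hn⟩
  refine ⟨n, ?_⟩
  rw [hα.image_hpow, MulHyperring.hpow_eq_hprod_replicate] at hn ⊢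
  exact hI _ _ ⟨0, hn, I.zero_mem⟩

theorem alphaRad_zero_subset_nilAlpha (H : MulHyperring R) (α : R → R) :
    alphaRad H α {0} ⊆ nilAlpha H α := by
  rintro x ⟨n, hn⟩
  obtain ⟨b, hb⟩ := H.hpow_nonempty x n
  exact ⟨n, hn ⟨b, hb, rfl⟩ ▸ Set.mem_image_of_mem α hb⟩

end HyperPaper

open HyperPaper

/-- `Nil_α(R) ⊆ ᵅ√⟨0⟩`, with equality since `⟨0⟩` is a
C-hyperideal. -/
theorem stmt12 {R : Type*} [AddCommGroup R] (H : MulHyperring R) (α : R → R)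
    (hα : IsGoodEndo H α) (hzero : ∀ r : R, H.hmul 0 r = {(0 : R)})
    (Z : Hyperideal H) (hZmin : ∀ J : Hyperideal H, Z.carrier ⊆ J.carrier)
    (hZC : IsCHyperideal H Z) :
    nilAlpha H α ⊆ alphaRad H α Z.carrier ∧
      nilAlpha H α = alphaRad H α Z.carrier := by
  have hsub := hZC.nilAlpha_subset_alphaRad hα
  refine ⟨hsub, hsub.antisymm ?_⟩
  rw [Hyperideal.carrier_eq_zero_of_forall_subset hzero hZmin]
  exact alphaRad_zero_subset_nilAlpha H α
end
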